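/- For every L > 0, the map a ↦ K^Be(a,a) on ℤ' is non-increasing (K^Be(a+1,a+1) ≤ K^Be(a,a) for all a ∈ ℤ'), satisfies K^Be(a,a) < 1 for every a ∈ ℤ', and K^Be(a,a) → 1 as a → −∞ along ℤ'. -/

import Mathlib

/-!
Bessel functions of the first kind of integer order and argument `2L`:
`J_n(2L) = ∑_{j≥0} (-1)^j L^{2j+n}/(j!(n+j)!)` for `n ≥ 0`, and `J_{-n} = (-1)^n J_n`.

Half-integers `ℤ' = ℤ + 1/2` are parametrized by `ℤ`: the half-integer `a = m + 1/2`
corresponds to `m : ℤ`.  For `l = j + 1/2 ∈ ℤ'_+` (`j : ℕ`) one has `a + l = m + j + 1 ∈ ℤ`,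
so the diagonal of the discrete Bessel kernel is
`K^Be(a,a) = ∑_{j≥0} J_{m+j+1}(2L)²`; also, `a ↦ a + 1` corresponds to `m ↦ m + 1` and
`a → -∞` along `ℤ'` corresponds to `m → -∞` in `ℤ`.
-/
noncomputable def besselJnat (L : ℝ) (n : ℕ) : ℝ :=
  ∑' j : ℕ, (-1 : ℝ) ^ j * L ^ (2 * j + n) / (Nat.factorial j * Nat.factorial (n + j))

noncomputable def besselJint (L : ℝ) (n : ℤ) : ℝ :=
  if 0 ≤ n then besselJnat L n.toNat else (-1 : ℝ) ^ (-n).toNat * besselJnat L (-n).toNat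

/-- Diagonal of the discrete Bessel kernel, `KBeDiag L m = K^Be(m + 1/2, m + 1/2)`. -/
noncomputable def KBeDiag (L : ℝ) (m : ℤ) : ℝ :=
  ∑' j : ℕ, besselJint L (m + j + 1) * besselJint L (m + j + 1)

/-!
Extend the power series of `J_n(2L)` to all `n ∈ ℤ` by `∑_j (-1)^j L^{2j+n}/(j!(n+j)!)`, the
terms with `n + j < 0` being zero. Regrouping the triple series `∑_n J_n(2L)²` by the power
`L^{2N}`, `N = n + j + j'`, gives `∑_N ((L - L)^N/N!)² = 1`: this is the constant coefficient of
`e^{L(t - 1/t)} e^{L(1/t - t)} = 1`. Hence `K^Be(m + 1/2) = ∑_{n > m} J_n²` decreases by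
`J_{m+1}²` at each step, tends to `1`, and `1 - K^Be(m + 1/2) = ∑_{n ≤ m} J_n² > 0` since
`J_{-k} = ± J_k` and `J_k(2L) > 0` once `L² < k + 1`: then its series is alternating with
decreasing terms, so it exceeds the difference of its first two terms.
-/

open Filter Finset
open scoped Nat

noncomputable def besselTerm (L : ℝ) (n : ℤ) (j : ℕ) : ℝ :=
  if 0 ≤ n + j then (-1) ^ j * L ^ (j + (n + j).toNat) / (j ! * (n + j).toNat !) else 0

lemma besselTerm_natCast (L : ℝ) (k j : ℕ) :
    besselTerm L k j = (-1) ^ j * L ^ (2 * j + k) / (j ! * (k + j)!) := by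
  rw [besselTerm, if_pos (by positivity), show ((k : ℤ) + j).toNat = k + j by omega,
    show j + (k + j) = 2 * j + k by omega]

lemma besselTerm_of_add_neg {L : ℝ} {n : ℤ} {j : ℕ} (h : n + j < 0) : besselTerm L n j = 0 :=
  if_neg h.not_ge

lemma besselTerm_neg_natCast_add (L : ℝ) (k j : ℕ) :
    besselTerm L (-k) (j + k) = (-1) ^ k * besselTerm L k j := by
  rw [besselTerm, if_pos (by omega), show (-(k : ℤ) + (j + k : ℕ)).toNat = j by omega,
    besselTerm_natCast, show j + k + j = 2 * j + k by omega, pow_add, add_comm k j]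
  ring

lemma summable_besselTerm_natCast (L : ℝ) (k : ℕ) : Summable (besselTerm L k) := by
  refine Summable.of_abs <| Summable.of_nonneg_of_le (fun _ => abs_nonneg _) (fun j => ?_)
    ((Real.summable_pow_div_factorial (L ^ 2)).mul_left (|L| ^ k))
  have hj : (1 : ℝ) ≤ (k + j)! := mod_cast (k + j).factorial_pos
  calc |besselTerm L k j| = |L| ^ (2 * j + k) / (j ! * (k + j)!) := by
        simp [besselTerm_natCast, abs_div]
    _ ≤ |L| ^ (2 * j + k) / j ! := by gcongr; exact le_mul_of_one_le_right (by positivity) hj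
    _ = |L| ^ k * ((L ^ 2) ^ j / j !) := by
        rw [pow_add, pow_mul, sq_abs]; ring

lemma besselJint_natCast (L : ℝ) (k : ℕ) : besselJint L k = besselJnat L k := by
  rw [besselJint, if_pos k.cast_nonneg, Int.toNat_natCast]

lemma besselJint_neg_natCast (L : ℝ) (k : ℕ) :
    besselJint L (-k) = (-1) ^ k * besselJnat L k := by
  rcases k.eq_zero_or_pos with rfl | hk
  · simp [besselJint]
  · rw [besselJint, if_neg (by omega), neg_neg, Int.toNat_natCast]

lemma hasSum_besselTerm (L : ℝ) (n : ℤ) : HasSum (besselTerm L n) (besselJint L n) := by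
  have hnat (k : ℕ) : HasSum (besselTerm L k) (besselJnat L k) := by
    convert (summable_besselTerm_natCast L k).hasSum using 1
    exact tsum_congr fun j => (besselTerm_natCast L k j).symm
  obtain ⟨k, rfl | rfl⟩ := n.eq_nat_or_neg
  · rw [besselJint_natCast]
    exact hnat k
  · rw [besselJint_neg_natCast, ← (add_left_injective k).hasSum_iff]
    · simpa only [Function.comp_def, besselTerm_neg_natCast_add]
        using (hnat k).mul_left ((-1) ^ k)
    · intro j hj
      exact besselTerm_of_add_neg (by
        by_contra h
        exact hj ⟨j - k, by simp only; omega⟩)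

noncomputable def binomTerm (x y : ℝ) (N j : ℕ) : ℝ :=
  if j ≤ N then x ^ j * y ^ (N - j) / (j ! * (N - j)!) else 0

lemma hasSum_binomTerm (x y : ℝ) (N : ℕ) : HasSum (binomTerm x y N) ((x + y) ^ N / N !) := by
  have hfin : ∀ j ∉ range (N + 1), binomTerm x y N j = 0 := fun j hj =>
    if_neg (by simpa [Nat.lt_succ_iff] using hj)
  suffices (x + y) ^ N / N ! = ∑ j ∈ range (N + 1), binomTerm x y N j from
    this ▸ hasSum_sum_of_ne_finset_zero hfin
  rw [add_pow, sum_div]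
  refine sum_congr rfl fun j hj => ?_
  have hjN : j ≤ N := Nat.lt_succ_iff.1 (mem_range.1 hj)
  rw [binomTerm, if_pos hjN, Nat.cast_choose ℝ hjN]
  field_simp

lemma abs_binomTerm (x y : ℝ) (N j : ℕ) : |binomTerm x y N j| = binomTerm |x| |y| N j := by
  unfold binomTerm
  split_ifs <;> simp [abs_div]

lemma summable_pow_div_factorial_sq (x : ℝ) : Summable fun N : ℕ => (x ^ N / N !) ^ 2 := by
  refine Summable.of_nonneg_of_le (fun _ => sq_nonneg _) (fun N => ?_)
    (Real.summable_pow_div_factorial (x ^ 2))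
  have hN : (1 : ℝ) ≤ N ! := mod_cast N.factorial_pos
  rw [div_pow, ← pow_mul, mul_comm, pow_mul, sq (N ! : ℝ)]
  gcongr
  exact le_mul_of_one_le_left (by positivity) hN

lemma hasSum_binomTerm_mul_binomTerm (x y : ℝ) (N : ℕ) :
    HasSum (fun q : ℕ × ℕ => binomTerm x y N q.1 * binomTerm x y N q.2)
      (((x + y) ^ N / N !) ^ 2) := by
  have hs : Summable fun j => ‖binomTerm x y N j‖ := (hasSum_binomTerm x y N).summable.norm
  rw [sq]
  exact (hasSum_binomTerm x y N).mul (hasSum_binomTerm x y N)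
    (summable_mul_of_summable_norm hs hs)

lemma summable_binomTerm_mul_binomTerm (x y : ℝ) :
    Summable fun p : ℕ × ℕ × ℕ => binomTerm x y p.1 p.2.1 * binomTerm x y p.1 p.2.2 := by
  refine Summable.of_abs ?_
  simp only [abs_mul, abs_binomTerm]
  refine (summable_prod_of_nonneg fun p => ?_).2
    ⟨fun N => (hasSum_binomTerm_mul_binomTerm |x| |y| N).summable, ?_⟩
  · simp only [Pi.zero_apply, ← abs_binomTerm]
    positivity
  · simpa only [fun N => (hasSum_binomTerm_mul_binomTerm |x| |y| N).tsum_eq]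
      using summable_pow_div_factorial_sq (|x| + |y|)

lemma hasSum_binomTerm_neg_mul_binomTerm (L : ℝ) :
    HasSum (fun p : ℕ × ℕ × ℕ => binomTerm (-L) L p.1 p.2.1 * binomTerm (-L) L p.1 p.2.2)
      1 := by
  have hfib (N : ℕ) := hasSum_binomTerm_mul_binomTerm (-L) L N
  have hdelta : HasSum (fun N : ℕ => ((-L + L) ^ N / N !) ^ 2) 1 := by
    convert hasSum_ite_eq 0 (1 : ℝ) with N
    rcases N.eq_zero_or_pos with rfl | hN
    · simp
    · simp [hN.ne']
  have hsum := (summable_binomTerm_mul_binomTerm (-L) L).hasSum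
  rwa [((hsum.prod_fiberwise hfib).unique hdelta)] at hsum

lemma besselTerm_mul_besselTerm_eq_binomTerm (L : ℝ) (N j j' : ℕ) :
    besselTerm L ((N : ℤ) - j - j') j * besselTerm L ((N : ℤ) - j - j') j' =
      binomTerm (-L) L N j * binomTerm (-L) L N j' := by
  by_cases hj : j ≤ N
  · by_cases hj' : j' ≤ N
    · have hpow : L ^ (j + (N - j')) * L ^ (j' + (N - j)) =
          L ^ j * L ^ (N - j) * (L ^ j' * L ^ (N - j')) := by
        simp only [← pow_add]
        congr 1
        omega
      rw [besselTerm, besselTerm, binomTerm, binomTerm, if_pos hj, if_pos hj', if_pos (by omega),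
        if_pos (by omega), show ((N : ℤ) - j - j' + j).toNat = N - j' by omega,
        show ((N : ℤ) - j - j' + j').toNat = N - j by omega, neg_pow L j, neg_pow L j',
        div_mul_div_comm, div_mul_div_comm]
      congr 1
      · linear_combination (-1) ^ j * (-1) ^ j' * hpow
      · ring
    · rw [besselTerm_of_add_neg (by omega), show binomTerm (-L) L N j' = 0 from if_neg hj',
        zero_mul, mul_zero]
  · rw [besselTerm_of_add_neg (L := L) (j := j') (by omega),
      show binomTerm (-L) L N j = 0 from if_neg hj, zero_mul, mul_zero]

lemma hasSum_besselTerm_mul_besselTerm (L : ℝ) :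
    HasSum (fun p : ℤ × ℕ × ℕ => besselTerm L p.1 p.2.1 * besselTerm L p.1 p.2.2) 1 := by
  -- the term indexed by `(n, j, j')` is a multiple of `L ^ (2 * N)` with `N = n + j + j'`
  set e : ℕ × ℕ × ℕ → ℤ × ℕ × ℕ :=
    fun p => ((p.1 : ℤ) - p.2.1 - p.2.2, p.2.1, p.2.2)
  have he : e.Injective := by
    rintro ⟨N, j, j'⟩ ⟨M, i, i'⟩ h
    simp only [e, Prod.mk.injEq] at h ⊢
    omega
  have hrange : ∀ p ∉ Set.range e, besselTerm L p.1 p.2.1 * besselTerm L p.1 p.2.2 = 0 := by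
    rintro ⟨n, j, j'⟩ hp
    by_contra hne
    obtain ⟨hj, hj'⟩ : 0 ≤ n + j ∧ 0 ≤ n + j' := by
      constructor <;> by_contra h <;> simp [besselTerm_of_add_neg (not_le.1 h)] at hne
    exact hp ⟨((n + j + j').toNat, j, j'), by simp only [e, Prod.mk.injEq, and_true]; omega⟩
  rw [← he.hasSum_iff hrange]
  simpa only [Function.comp_def, e, besselTerm_mul_besselTerm_eq_binomTerm]
    using hasSum_binomTerm_neg_mul_binomTerm L

lemma hasSum_besselJint_mul_self (L : ℝ) :
    HasSum (fun n : ℤ => besselJint L n * besselJint L n) 1 := by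
  refine (hasSum_besselTerm_mul_besselTerm L).prod_fiberwise fun n => ?_
  have hs : Summable fun j => ‖besselTerm L n j‖ := (hasSum_besselTerm L n).summable.norm
  have hmul := (hasSum_besselTerm L n).mul (hasSum_besselTerm L n)
    (summable_mul_of_summable_norm hs hs)
  exact hmul

lemma KBeDiag_eq_add (L : ℝ) (m : ℤ) :
    KBeDiag L m = besselJint L (m + 1) * besselJint L (m + 1) + KBeDiag L (m + 1) := by
  have hs : Summable fun j : ℕ => besselJint L (m + j + 1) * besselJint L (m + j + 1) :=
    (hasSum_besselJint_mul_self L).summable.comp_injective fun a b h => by simpa using h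
  rw [KBeDiag, hs.tsum_eq_zero_add, KBeDiag]
  push_cast
  ring_nf

lemma KBeDiag_add_tsum_besselJint_sub_mul_self (L : ℝ) (m : ℤ) :
    KBeDiag L m + ∑' j : ℕ, besselJint L (m - j) * besselJint L (m - j) = 1 := by
  set f : ℤ → ℝ := fun n => besselJint L (m + 1 + n) * besselJint L (m + 1 + n)
  have hf : HasSum f 1 := by
    simpa only [Function.comp_def, Equiv.coe_addLeft]
      using (Equiv.addLeft (m + 1)).hasSum_iff.2 (hasSum_besselJint_mul_self L)
  have hpos : Summable fun n : ℕ => f n := hf.summable.comp_injective Nat.cast_injective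
  have hneg : Summable fun n : ℕ => f (-(n + 1)) :=
    hf.summable.comp_injective fun a b h => by simpa using h
  rw [← hf.tsum_eq, tsum_of_nat_of_neg_add_one hpos hneg, KBeDiag]
  congr 1 <;> refine tsum_congr fun j => ?_ <;> simp only [f] <;> ring_nf

lemma tendsto_tsum_besselJint_sub_mul_self_atBot (L : ℝ) :
    Tendsto (fun m : ℤ => ∑' j : ℕ, besselJint L (m - j) * besselJint L (m - j)) atBot
      (nhds 0) := by
  have htoNat : Tendsto (fun m : ℤ => (-m).toNat) atBot atTop :=
    tendsto_atBot_atTop.2 fun b => ⟨-b, fun m hm => by omega⟩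
  refine ((tendsto_sum_nat_add fun k => besselJint L (-k) * besselJint L (-k)).comp
    htoNat).congr' ?_
  filter_upwards [eventually_le_atBot 0] with m hm
  refine tsum_congr fun j => ?_
  simp only [show -((j + (-m).toNat : ℕ) : ℤ) = m - j by omega]

lemma besselJnat_pos {L : ℝ} (hL : 0 < L) {k : ℕ} (hk : L ^ 2 < k + 1) :
    0 < besselJnat L k := by
  set a : ℕ → ℝ := fun j => L ^ (2 * j + k) / (j ! * (k + j)!)
  have hsum : HasSum (fun j => (-1) ^ j * a j) (besselJnat L k) := by
    rw [← besselJint_natCast]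
    convert hasSum_besselTerm L k using 2 with j
    rw [besselTerm_natCast, mul_div_assoc]
  have hstep (j : ℕ) : a (j + 1) = a j * (L ^ 2 / ((j + 1) * (k + j + 1))) := by
    simp only [a, show 2 * (j + 1) + k = 2 * j + k + 2 by ring, ← add_assoc, Nat.factorial_succ]
    push_cast
    field_simp
    ring
  have ha : Antitone a := antitone_nat_of_succ_le fun j => by
    rw [hstep]
    refine mul_le_of_le_one_right (by positivity) ((div_le_one (by positivity)).2 ?_)
    nlinarith [(j.cast_nonneg : (0 : ℝ) ≤ j), (k.cast_nonneg : (0 : ℝ) ≤ k)]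
  have ha1 : a 1 < a 0 := by
    rw [hstep, Nat.cast_zero, zero_add, one_mul, add_zero]
    refine mul_lt_of_lt_one_right (by positivity) ((div_lt_one (by positivity)).2 ?_)
    simpa using hk
  have hpair := ha.alternating_series_le_tendsto hsum.tendsto_sum_nat 1
  simp only [mul_one, sum_range_succ, sum_range_zero] at hpair
  linarith

lemma tsum_besselJint_sub_mul_self_pos {L : ℝ} (hL : 0 < L) (m : ℤ) :
    0 < ∑' j : ℕ, besselJint L (m - j) * besselJint L (m - j) := by
  obtain ⟨k, hk⟩ := exists_nat_gt (L ^ 2)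
  set K := k + (-m).toNat
  have hkK : (k : ℝ) ≤ K := mod_cast k.le_add_right _
  have hJ : 0 < besselJnat L K := besselJnat_pos hL (by linarith)
  refine Summable.tsum_pos ((hasSum_besselJint_mul_self L).summable.comp_injective
    fun a b h => by simpa using h) (fun _ => mul_self_nonneg _) (m + K).toNat ?_
  rw [show m - ((m + K).toNat : ℕ) = -(K : ℤ) by omega, besselJint_neg_natCast]
  exact mul_self_pos.2 (mul_ne_zero (pow_ne_zero _ (by norm_num)) hJ.ne')

/-- for `L > 0`, the map `a ↦ K^Be(a,a)` on `ℤ'` is non-increasing, is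
everywhere `< 1`, and tends to `1` as `a → -∞` along `ℤ'`. -/
theorem discreteBesselKernel_diagonal_monotonicity (L : ℝ) (hL : 0 < L) :
    (∀ m : ℤ, KBeDiag L (m + 1) ≤ KBeDiag L m) ∧
    (∀ m : ℤ, KBeDiag L m < 1) ∧
    Filter.Tendsto (fun m : ℤ => KBeDiag L m) Filter.atBot (nhds 1) := by
  have hK (m : ℤ) :
      KBeDiag L m = 1 - ∑' j : ℕ, besselJint L (m - j) * besselJint L (m - j) := by
    linarith [KBeDiag_add_tsum_besselJint_sub_mul_self L m]
  refine ⟨fun m => ?_, fun m => ?_, ?_⟩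
  · linarith [KBeDiag_eq_add L m, mul_self_nonneg (besselJint L (m + 1))]
  · linarith [hK m, tsum_besselJint_sub_mul_self_pos hL m]
  · simp_rw [hK]
    simpa using (tendsto_tsum_besselJint_sub_mul_self_atBot L).const_sub 1
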